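/- Let a, b, n be integers with n ≥ 2, 0 ≤ a, b ≤ n − 1 and gcd(a, n) = gcd(b, n) = gcd(1 − a − b, n) = 1, and suppose w is a point of ℤ³ in the interior of T_{a,b,n} with BC(w) = (d₁/n, d₂/n, d₃/n, d₄/n), where d₁, d₂, d₃, d₄ are positive integers with d₁ + d₂ + d₃ + d₄ = n and gcd(dⱼ, n) = 1 for each j. If for every integer s with 2 ≤ s ≤ n − 1 one has {s d₁/n} + {s d₂/n} + {s d₃/n} + {s d₄/n} > 1, then T_{a,b,n} is a 1-point lattice tetrahedron. -/

import Mathlib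

open scoped BigOperators

/-- A point of `ℝ³` is a lattice point if every coordinate is an integer. -/
def IsLatticePoint (x : Fin 3 → ℝ) : Prop := ∀ i, ∃ z : ℤ, x i = (z : ℝ)

/-- Four lattice points of `ℝ³` that are not coplanar: the vertex map of a lattice tetrahedron. -/
def IsLatticeTet (v : Fin 4 → Fin 3 → ℝ) : Prop :=
  (∀ j, IsLatticePoint (v j)) ∧ AffineIndependent ℝ v

/-- The solid tetrahedron spanned by the four vertices. -/
def tetSet (v : Fin 4 → Fin 3 → ℝ) : Set (Fin 3 → ℝ) := convexHull ℝ (Set.range v)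

/-- A lattice tetrahedron is clean if the only lattice points on its boundary are its vertices. -/
def CleanTet (v : Fin 4 → Fin 3 → ℝ) : Prop :=
  ∀ x ∈ frontier (tetSet v), IsLatticePoint x → x ∈ Set.range v

/-- The affine map `x ↦ M x + u` determined by an integer matrix `M` and integer vector `u`. -/
noncomputable def affMap (M : Matrix (Fin 3) (Fin 3) ℤ) (u : Fin 3 → ℤ) (x : Fin 3 → ℝ) :
    Fin 3 → ℝ :=
  fun i => (∑ j, (M i j : ℝ) * x j) + (u i : ℝ)

/-- Two lattice tetrahedra are equivalent if an affine unimodular map carries the vertex set of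
one onto the vertex set of the other. -/
def TetEquiv (v v' : Fin 4 → Fin 3 → ℝ) : Prop :=
  ∃ M : Matrix (Fin 3) (Fin 3) ℤ, (M.det = 1 ∨ M.det = -1) ∧
    ∃ u : Fin 3 → ℤ, affMap M u '' Set.range v = Set.range v'

/-- The tetrahedron `T_{a,b,n}` with vertices `(0,0,0)`, `(1,0,0)`, `(0,1,0)`, `(a,b,n)`. -/
noncomputable def stdTet (a b n : ℤ) : Fin 4 → Fin 3 → ℝ :=
  ![![0, 0, 0], ![1, 0, 0], ![0, 1, 0], ![(a : ℝ), (b : ℝ), (n : ℝ)]]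

/-- The number `i(T)` of lattice points interior to the tetrahedron. -/
noncomputable def interiorLatticeCount (v : Fin 4 → Fin 3 → ℝ) : ℕ :=
  Set.ncard {x : Fin 3 → ℝ | x ∈ interior (tetSet v) ∧ IsLatticePoint x}

/-- A 1-point lattice tetrahedron: clean, with exactly one interior lattice point. -/
def OnePointTet (v : Fin 4 → Fin 3 → ℝ) : Prop :=
  IsLatticeTet v ∧ CleanTet v ∧
    ∃! w : Fin 3 → ℝ, w ∈ interior (tetSet v) ∧ IsLatticePoint w

/-- An empty tetrahedron: no lattice points in the interior. -/
def IsEmptyTet (v : Fin 4 → Fin 3 → ℝ) : Prop :=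
  ∀ x ∈ interior (tetSet v), ¬ IsLatticePoint x

/-- A quadruple `(d₁,d₂,d₃,d₄)` of positive integers is ripe if, with `N = ∑ dⱼ`:
(i) each `gcd(dⱼ, N) = 1`; (ii) each `dᵢ` divides the sum of two of the other three;
(iii) `dⱼ = dᵢ` (for `j ≠ i`) or `dⱼ = 2 dᵢ` forces `dᵢ = 1`. -/
def Ripe (d : Fin 4 → ℤ) : Prop :=
  (∀ j, 0 < d j) ∧
  (∀ j, Int.gcd (d j) (∑ i, d i) = 1) ∧
  (∀ i, ∃ j k, j ≠ i ∧ k ≠ i ∧ j ≠ k ∧ d i ∣ (d j + d k)) ∧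
  (∀ i j, ((j ≠ i ∧ d j = d i) ∨ d j = 2 * d i) → d i = 1)

/-- The `u`-width of a set `S ⊆ ℝ³`: `max {u·x : x ∈ S} - min {u·x : x ∈ S}`. -/
noncomputable def uWidth (S : Set (Fin 3 → ℝ)) (u : Fin 3 → ℤ) : ℝ :=
  sSup ((fun x => ∑ i, (u i : ℝ) * x i) '' S) - sInf ((fun x => ∑ i, (u i : ℝ) * x i) '' S)

/-- The lattice width of a set: the minimum of its `u`-widths over nonzero integer `u`. -/
noncomputable def latticeWidth (S : Set (Fin 3 → ℝ)) : ℝ :=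
  sInf {w : ℝ | ∃ u : Fin 3 → ℤ, u ≠ 0 ∧ uWidth S u = w}


noncomputable def lam (a b n : ℤ) : Fin 4 → (Fin 3 → ℝ) → ℝ :=
  ![fun x => 1 - (x 0 - (a:ℝ) * x 2 / (n:ℝ)) - (x 1 - (b:ℝ) * x 2 / (n:ℝ)) - x 2 / (n:ℝ),
    fun x => x 0 - (a:ℝ) * x 2 / (n:ℝ),
    fun x => x 1 - (b:ℝ) * x 2 / (n:ℝ),
    fun x => x 2 / (n:ℝ)]

lemma lam_sum (a b n : ℤ) (x : Fin 3 → ℝ) : ∑ i, lam a b n i x = 1 := by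
  simp [lam, Fin.sum_univ_four]; ring

lemma lam_smul_sum (a b n : ℤ) (hn : (n:ℝ) ≠ 0) (x : Fin 3 → ℝ) :
    ∑ i, lam a b n i x • stdTet a b n i = x := by
  funext k
  rw [Finset.sum_apply]
  fin_cases k <;>
    · simp [lam, stdTet, Fin.sum_univ_four]
      try field_simp
      try ring

lemma stdTet_affineIndependent (a b n : ℤ) (hn : (n:ℝ) ≠ 0) :
    AffineIndependent ℝ (stdTet a b n) := by
  classical
  rw [affineIndependent_iff]
  intro s w hw0 hws e he
  set W : Fin 4 → ℝ := fun i => if i ∈ s then w i else 0 with hW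
  have hsum : ∑ i, W i = 0 := by
    rw [hW]; simp only [Finset.sum_ite_mem, Finset.univ_inter]; exact hw0
  have hvec : ∑ i, W i • stdTet a b n i = 0 := by
    rw [hW]
    simp only [ite_smul, zero_smul]
    rw [Finset.sum_ite_mem, Finset.univ_inter]
    exact hws
  have h2 := congrFun hvec 2
  have h0 := congrFun hvec 0
  have h1 := congrFun hvec 1
  rw [Finset.sum_apply] at h0 h1 h2
  simp [stdTet, Fin.sum_univ_four] at h0 h1 h2
  rw [Fin.sum_univ_four] at hsum
  have hW3 : W 3 = 0 := by
    rcases h2 with h | h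
    · exact h
    · exact absurd (by exact_mod_cast h) hn
  have hW1 : W 1 = 0 := by rw [hW3] at h0; simpa using h0
  have hW2 : W 2 = 0 := by rw [hW3] at h1; simpa using h1
  have hW0 : W 0 = 0 := by rw [hW1, hW2, hW3] at hsum; linarith
  have : W e = w e := by rw [hW]; simp [he]
  rw [← this]
  fin_cases e <;> assumption

noncomputable def tetBasis (a b n : ℤ) (hn : (n:ℝ) ≠ 0) : AffineBasis (Fin 4) ℝ (Fin 3 → ℝ) where
  toFun := stdTet a b n
  ind' := stdTet_affineIndependent a b n hn
  tot' := by
    rw [(stdTet_affineIndependent a b n hn).affineSpan_eq_top_iff_card_eq_finrank_add_one]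
    simp

lemma tetBasis_coe (a b n : ℤ) (hn : (n:ℝ) ≠ 0) : ⇑(tetBasis a b n hn) = stdTet a b n := rfl

lemma tetBasis_coord (a b n : ℤ) (hn : (n:ℝ) ≠ 0) (i : Fin 4) (x : Fin 3 → ℝ) :
    (tetBasis a b n hn).coord i x = lam a b n i x := by
  have hx : x = Finset.univ.affineCombination ℝ (stdTet a b n) (fun j => lam a b n j x) := by
    rw [Finset.affineCombination_eq_linear_combination _ _ _ (lam_sum a b n x)]
    exact (lam_smul_sum a b n hn x).symm
  conv_lhs => rw [hx]
  exact (tetBasis a b n hn).coord_apply_combination_of_mem (Finset.mem_univ i) (lam_sum a b n x)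


lemma mem_interior_tetSet (a b n : ℤ) (hn : (n:ℝ) ≠ 0) (x : Fin 3 → ℝ) :
    x ∈ interior (tetSet (stdTet a b n)) ↔ ∀ i, 0 < lam a b n i x := by
  rw [tetSet, ← tetBasis_coe a b n hn, AffineBasis.interior_convexHull]
  simp only [Set.mem_setOf_eq, tetBasis_coord]

lemma mem_tetSet (a b n : ℤ) (hn : (n:ℝ) ≠ 0) (x : Fin 3 → ℝ) :
    x ∈ tetSet (stdTet a b n) ↔ ∀ i, 0 ≤ lam a b n i x := by
  rw [tetSet, ← tetBasis_coe a b n hn, AffineBasis.convexHull_eq_nonneg_coord]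
  simp only [Set.mem_setOf_eq, tetBasis_coord]

lemma tetSet_closed (v : Fin 4 → Fin 3 → ℝ) : IsClosed (tetSet v) :=
  ((Set.finite_range v).isCompact_convexHull (𝕜 := ℝ)).isClosed

def Nint (a b n x y z : ℤ) : Fin 4 → ℤ :=
  ![n - n*x - n*y + (a+b-1)*z, n*x - a*z, n*y - b*z, z]

lemma Nint_sum (a b n x y z : ℤ) : ∑ i, Nint a b n x y z i = n := by
  simp [Nint, Fin.sum_univ_four]; ring

lemma lam_eq_Nint (a b n : ℤ) (hn : (n:ℝ) ≠ 0) (p : Fin 3 → ℝ) (x y z : ℤ)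
    (h0 : p 0 = (x:ℝ)) (h1 : p 1 = (y:ℝ)) (h2 : p 2 = (z:ℝ)) (i : Fin 4) :
    lam a b n i p = ((Nint a b n x y z i : ℤ) : ℝ) / (n:ℝ) := by
  fin_cases i <;>
    · simp [lam, Nint, h0, h1, h2]
      try push_cast
      try field_simp
      try ring

lemma eq_of_dvd_sub_small {n A B : ℤ} (h : n ∣ A - B) (hA : 0 < A) (hA' : A < n)
    (hB : 0 < B) (hB' : B < n) : A = B := by
  obtain ⟨c, hc⟩ := h
  have hc0 : c = 0 := by
    rcases lt_trichotomy c 0 with h | h | h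
    · nlinarith
    · exact h
    · nlinarith
  rw [hc0, mul_zero] at hc
  omega

lemma key_unique (a b n : ℤ) (hn : 2 ≤ n) (dd : Fin 4 → ℤ) (hpos : ∀ j, 0 < dd j)
    (hsum : (∑ j, dd j) = n) (hg3 : Int.gcd (dd 3) n = 1)
    (hda : n ∣ dd 1 + a * dd 3) (hdb : n ∣ dd 2 + b * dd 3)
    (hfr : ∀ s : ℤ, 2 ≤ s → s ≤ n - 1 →
      1 < ∑ j, Int.fract (((s * dd j : ℤ) : ℝ) / (n : ℝ)))
    (x y z : ℤ) (hNpos : ∀ i, 0 < Nint a b n x y z i) :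
    ∀ i, Nint a b n x y z i = dd i := by
  have hn0 : (0:ℤ) < n := by omega
  have hsum4 : dd 0 + dd 1 + dd 2 + dd 3 = n := by
    rw [← hsum, Fin.sum_univ_four]
  have hdlt : ∀ j, dd j < n := by
    have h0 := hpos 0; have h1 := hpos 1; have h2 := hpos 2; have h3 := hpos 3
    intro j; fin_cases j
    · show dd 0 < n; omega
    · show dd 1 < n; omega
    · show dd 2 < n; omega
    · show dd 3 < n; omega
  have hNsum : Nint a b n x y z 0 + Nint a b n x y z 1 + Nint a b n x y z 2
      + Nint a b n x y z 3 = n := by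
    have h := Nint_sum a b n x y z
    rw [Fin.sum_univ_four] at h
    exact h
  have hNlt : ∀ i, Nint a b n x y z i < n := by
    have h0 := hNpos 0; have h1 := hNpos 1; have h2 := hNpos 2; have h3 := hNpos 3
    intro i; fin_cases i
    · show Nint a b n x y z 0 < n; linarith
    · show Nint a b n x y z 1 < n; linarith
    · show Nint a b n x y z 2 < n; linarith
    · show Nint a b n x y z 3 < n; linarith
  obtain ⟨u, v, huv⟩ : ∃ u v : ℤ, u * dd 3 + v * n = 1 := by
    obtain ⟨u, v, h⟩ := Int.isCoprime_iff_gcd_eq_one.mpr hg3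
    exact ⟨u, v, h⟩
  set t : ℤ := (u * z) % n with htdef
  set q : ℤ := (u * z) / n with hqdef
  have hq : n * q + t = u * z := Int.mul_ediv_add_emod _ _
  have ht0 : 0 ≤ t := Int.emod_nonneg _ (by omega)
  have htn : t < n := Int.emod_lt_of_pos _ hn0
  obtain ⟨m1, hm1⟩ := hda
  obtain ⟨m2, hm2⟩ := hdb
  have hz3 : z - t * dd 3 = n * (z * v + q * dd 3) := by
    linear_combination (-z) * huv + (-(dd 3)) * hq
  have hz1 : Nint a b n x y z 1 - t * dd 1 = n * (x - a * (z * v + q * dd 3) - t * m1) := by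
    simp only [Nint, Matrix.cons_val_one, Matrix.head_cons, Matrix.cons_val_zero]
    linear_combination (-a) * hz3 + (-t) * hm1
  have hz2 : Nint a b n x y z 2 - t * dd 2 = n * (y - b * (z * v + q * dd 3) - t * m2) := by
    simp only [Nint, Matrix.cons_val_two, Matrix.tail_cons, Matrix.head_cons]
    linear_combination (-b) * hz3 + (-t) * hm2
  have hz0 : Nint a b n x y z 0 - t * dd 0 =
      n * ((1 - t) - (x - a * (z * v + q * dd 3) - t * m1)
        - (y - b * (z * v + q * dd 3) - t * m2) - (z * v + q * dd 3)) := by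
    have e1 := hz1; have e2 := hz2
    simp only [Nint, Matrix.cons_val_one, Matrix.head_cons, Matrix.cons_val_two,
      Matrix.tail_cons, Matrix.cons_val_zero, Matrix.cons_val_three] at e1 e2 ⊢
    linear_combination (-1) * e1 + (-1) * e2 + (-1) * hz3 + (-t) * hsum4
  have hdiff : ∀ i, n ∣ Nint a b n x y z i - t * dd i := by
    intro i
    fin_cases i
    · exact ⟨_, hz0⟩
    · exact ⟨_, hz1⟩
    · exact ⟨_, hz2⟩
    · exact ⟨_, by simpa [Nint] using hz3⟩
  have htne0 : t ≠ 0 := by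
    intro ht
    rw [ht] at hz3
    simp only [zero_mul, sub_zero] at hz3
    have hzpos := hNpos 3
    have hzlt := hNlt 3
    simp only [Nint, Matrix.cons_val_three, Matrix.tail_cons, Matrix.head_cons] at hzpos hzlt
    set k := z * v + q * dd 3 with hk
    rcases lt_trichotomy k 0 with h | h | h
    · nlinarith
    · rw [h, mul_zero] at hz3; omega
    · nlinarith
  rcases eq_or_lt_of_le (show (1:ℤ) ≤ t by omega) with ht1 | ht2
  · intro i
    refine eq_of_dvd_sub_small ?_ (hNpos i) (hNlt i) (hpos i) (hdlt i)
    have := hdiff i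
    rw [← ht1, one_mul] at this
    exact this
  · exfalso
    have hfr' := hfr t ht2 (by omega)
    have hfract : ∀ i, Int.fract (((t * dd i : ℤ) : ℝ) / (n : ℝ)) =
        ((Nint a b n x y z i : ℤ) : ℝ) / (n : ℝ) := by
      intro i
      obtain ⟨c, hc⟩ := hdiff i
      have hnR : (n:ℝ) ≠ 0 := by exact_mod_cast hn0.ne'
      have heq : ((t * dd i : ℤ) : ℝ) / (n : ℝ) =
          ((Nint a b n x y z i : ℤ) : ℝ) / (n : ℝ) - (c : ℝ) := by
        have : (Nint a b n x y z i : ℝ) - (t : ℝ) * (dd i : ℝ) = (n : ℝ) * (c : ℝ) := by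
          exact_mod_cast congrArg (Int.cast : ℤ → ℝ) hc
        push_cast
        field_simp
        linarith
      rw [heq]
      rw [Int.fract_sub_intCast]
      rw [Int.fract_eq_self.mpr]
      constructor
      · apply div_nonneg
        · exact_mod_cast (hNpos i).le
        · exact_mod_cast hn0.le
      · rw [div_lt_one (by exact_mod_cast hn0)]
        exact_mod_cast hNlt i
    rw [Fin.sum_univ_four] at hfr'
    rw [hfract 0, hfract 1, hfract 2, hfract 3] at hfr'
    have : ((Nint a b n x y z 0 : ℤ) : ℝ) / n + ((Nint a b n x y z 1 : ℤ) : ℝ) / n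
        + ((Nint a b n x y z 2 : ℤ) : ℝ) / n + ((Nint a b n x y z 3 : ℤ) : ℝ) / n = 1 := by
      have hnR : (n:ℝ) ≠ 0 := by exact_mod_cast hn0.ne'
      field_simp
      exact_mod_cast hNsum
    linarith


lemma nonneg_of_mul_nonneg (n x : ℤ) (hn : 0 < n) (h : 0 ≤ n * x) : 0 ≤ x := by
  by_contra h'
  push_neg at h'
  nlinarith

lemma not_dvd_of_between (n z : ℤ) (h1 : 0 < z) (h2 : z < n) : ¬ n ∣ z := by
  rintro ⟨k, hk⟩
  rcases lt_trichotomy k 0 with h | h | h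
  · nlinarith
  · rw [h, mul_zero] at hk; omega
  · nlinarith

theorem stmt10 (a b n : ℤ) (hn : 2 ≤ n) (ha0 : 0 ≤ a) (ha1 : a ≤ n - 1)
    (hb0 : 0 ≤ b) (hb1 : b ≤ n - 1)
    (hga : Int.gcd a n = 1) (hgb : Int.gcd b n = 1) (hgc : Int.gcd (1 - a - b) n = 1)
    (w : Fin 3 → ℝ) (hw : w ∈ interior (tetSet (stdTet a b n))) (hwl : IsLatticePoint w)
    (dd : Fin 4 → ℤ) (hpos : ∀ j, 0 < dd j) (hsum : (∑ j, dd j) = n)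
    (hgcd : ∀ j, Int.gcd (dd j) n = 1)
    (hBC : w = ∑ j, ((dd j : ℝ) / (n : ℝ)) • stdTet a b n j)
    (hfr : ∀ s : ℤ, 2 ≤ s → s ≤ n - 1 →
      1 < ∑ j, Int.fract (((s * dd j : ℤ) : ℝ) / (n : ℝ))) :
    OnePointTet (stdTet a b n) := by
  have hn0 : (0:ℤ) < n := by omega
  have hnR : (n:ℝ) ≠ 0 := by
    simpa using (show ((n:ℝ)) ≠ 0 from Int.cast_ne_zero.mpr (by omega))
  have hnRpos : (0:ℝ) < (n:ℝ) := by exact_mod_cast hn0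
  -- coordinates of w
  have hw0 := congrFun hBC 0
  have hw1 := congrFun hBC 1
  have hw2 := congrFun hBC 2
  rw [Finset.sum_apply] at hw0 hw1 hw2
  simp [stdTet, Fin.sum_univ_four] at hw0 hw1 hw2
  -- divisibility facts from w being a lattice point
  obtain ⟨x0, hx0⟩ := hwl 0
  obtain ⟨y0, hy0⟩ := hwl 1
  have hda : n ∣ dd 1 + a * dd 3 := by
    refine ⟨x0, ?_⟩
    have : ((dd 1 + a * dd 3 : ℤ) : ℝ) = (n : ℝ) * (x0 : ℝ) := by
      rw [hx0] at hw0
      push_cast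
      field_simp at hw0
      linarith
    exact_mod_cast this
  have hdb : n ∣ dd 2 + b * dd 3 := by
    refine ⟨y0, ?_⟩
    have : ((dd 2 + b * dd 3 : ℤ) : ℝ) = (n : ℝ) * (y0 : ℝ) := by
      rw [hy0] at hw1
      push_cast
      field_simp at hw1
      linarith
    exact_mod_cast this
  refine ⟨⟨?_, stdTet_affineIndependent a b n hnR⟩, ?_, ?_⟩
  · -- vertices are lattice points
    intro j i
    fin_cases j <;> fin_cases i
    · exact ⟨0, by norm_num [stdTet]⟩
    · exact ⟨0, by norm_num [stdTet]⟩
    · exact ⟨0, by norm_num [stdTet]⟩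
    · exact ⟨1, by norm_num [stdTet]⟩
    · exact ⟨0, by norm_num [stdTet]⟩
    · exact ⟨0, by norm_num [stdTet]⟩
    · exact ⟨0, by norm_num [stdTet]⟩
    · exact ⟨1, by norm_num [stdTet]⟩
    · exact ⟨0, by norm_num [stdTet]⟩
    · exact ⟨a, by norm_num [stdTet]⟩
    · exact ⟨b, by norm_num [stdTet]⟩
    · exact ⟨n, by norm_num [stdTet]⟩
  · -- CleanTet
    intro p hpf hpl
    obtain ⟨x, hx⟩ := hpl 0
    obtain ⟨y, hy⟩ := hpl 1
    obtain ⟨z, hz⟩ := hpl 2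
    have hpt : p ∈ tetSet (stdTet a b n) := by
      have h1 : p ∈ closure (tetSet (stdTet a b n)) := frontier_subset_closure hpf
      rwa [IsClosed.closure_eq (tetSet_closed _)] at h1
    have hpnotint : p ∉ interior (tetSet (stdTet a b n)) := by
      rw [IsClosed.frontier_eq (tetSet_closed _)] at hpf
      exact hpf.2
    have hNe := fun i => lam_eq_Nint a b n hnR p x y z hx hy hz i
    have hN0 : ∀ i, 0 ≤ Nint a b n x y z i := by
      intro i
      have h := (mem_tetSet a b n hnR p).mp hpt i
      rw [hNe i] at h
      rw [le_div_iff₀ hnRpos] at h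
      simpa using (show (0:ℤ) ≤ Nint a b n x y z i by exact_mod_cast (by simpa using h))
    have hexzero : ∃ i, Nint a b n x y z i = 0 := by
      by_contra hcon
      push_neg at hcon
      apply hpnotint
      rw [mem_interior_tetSet a b n hnR]
      intro i
      rw [hNe i]
      have hpos' : 0 < Nint a b n x y z i := lt_of_le_of_ne (hN0 i) (Ne.symm (hcon i))
      apply div_pos _ hnRpos
      exact_mod_cast hpos'
    have hA0 : 0 ≤ n - n*x - n*y + (a+b-1)*z := by simpa [Nint] using hN0 0
    have hA1 : 0 ≤ n*x - a*z := by simpa [Nint] using hN0 1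
    have hA2 : 0 ≤ n*y - b*z := by simpa [Nint] using hN0 2
    have hA3 : 0 ≤ z := by simpa [Nint] using hN0 3
    have hzn : z ≤ n := by nlinarith
    have hcase : z = 0 ∨ z = n ∨ (0 < z ∧ z < n) := by omega
    rcases hcase with hz0 | hzn' | ⟨hzp, hzl⟩
    · -- z = 0 : base triangle
      subst hz0
      have hx0' : 0 ≤ x := by
        have h : 0 ≤ n * x := by linarith
        exact nonneg_of_mul_nonneg n x hn0 h
      have hy0' : 0 ≤ y := by
        have h : 0 ≤ n * y := by linarith
        exact nonneg_of_mul_nonneg n y hn0 h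
      have hxy : x + y ≤ 1 := by
        have h : 0 ≤ n * (1 - x - y) := by linarith
        have := nonneg_of_mul_nonneg n (1 - x - y) hn0 h
        omega
      have : (x = 0 ∧ y = 0) ∨ (x = 1 ∧ y = 0) ∨ (x = 0 ∧ y = 1) := by omega
      rcases this with ⟨hxe, hye⟩ | ⟨hxe, hye⟩ | ⟨hxe, hye⟩
      · exact ⟨0, by funext i; fin_cases i <;> simp [stdTet, hx, hy, hz, hxe, hye]⟩
      · exact ⟨1, by funext i; fin_cases i <;> simp [stdTet, hx, hy, hz, hxe, hye]⟩
      · exact ⟨2, by funext i; fin_cases i <;> simp [stdTet, hx, hy, hz, hxe, hye]⟩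
    · -- z = n : apex
      rw [hzn'] at hA0 hA1 hA2 hz
      have hxa : a ≤ x := by
        have h : 0 ≤ n * (x - a) := by linarith
        have := nonneg_of_mul_nonneg n (x - a) hn0 h
        omega
      have hyb : b ≤ y := by
        have h : 0 ≤ n * (y - b) := by linarith
        have := nonneg_of_mul_nonneg n (y - b) hn0 h
        omega
      have hxy : x + y ≤ a + b := by
        have h : 0 ≤ n * (a + b - x - y) := by linarith
        have := nonneg_of_mul_nonneg n (a + b - x - y) hn0 h
        omega
      have hxe : x = a := by omega
      have hye : y = b := by omega
      exact ⟨3, by funext i; fin_cases i <;> simp [stdTet, hx, hy, hz, hxe, hye]⟩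
    · -- 0 < z < n : impossible
      exfalso
      obtain ⟨i, hi⟩ := hexzero
      have hndvdz : ¬ n ∣ z := not_dvd_of_between n z hzp hzl
      fin_cases i <;> simp [Nint] at hi
      · -- N0 = 0
        apply hndvdz
        have hdvd : n ∣ (1 - a - b) * z := by
          refine ⟨1 - x - y, ?_⟩
          linarith
        exact ((Int.isCoprime_iff_gcd_eq_one.mpr hgc).symm).dvd_of_dvd_mul_left hdvd
      · -- N1 = 0
        apply hndvdz
        have hdvd : n ∣ a * z := ⟨x, by linarith⟩
        exact ((Int.isCoprime_iff_gcd_eq_one.mpr hga).symm).dvd_of_dvd_mul_left hdvd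
      · -- N2 = 0
        apply hndvdz
        have hdvd : n ∣ b * z := ⟨y, by linarith⟩
        exact ((Int.isCoprime_iff_gcd_eq_one.mpr hgb).symm).dvd_of_dvd_mul_left hdvd
      · omega
  · -- uniqueness
    refine ⟨w, ⟨hw, hwl⟩, ?_⟩
    rintro p ⟨hpint, hpl⟩
    obtain ⟨x, hx⟩ := hpl 0
    obtain ⟨y, hy⟩ := hpl 1
    obtain ⟨z, hz⟩ := hpl 2
    have hNe := fun i => lam_eq_Nint a b n hnR p x y z hx hy hz i
    have hNpos : ∀ i, 0 < Nint a b n x y z i := by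
      intro i
      have h := (mem_interior_tetSet a b n hnR p).mp hpint i
      rw [hNe i] at h
      rw [div_pos_iff] at h
      rcases h with ⟨h1, _⟩ | ⟨_, h2⟩
      · exact_mod_cast h1
      · linarith
    have hkey := key_unique a b n hn dd hpos hsum (hgcd 3) hda hdb hfr x y z hNpos
    have h1 : p = ∑ i, lam a b n i p • stdTet a b n i := (lam_smul_sum a b n hnR p).symm
    rw [hBC, h1]
    refine Finset.sum_congr rfl fun i _ => ?_
    rw [hNe i, hkey i]
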